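/- (G normalizes ASO(2).) Let σ : ℝ³ → ℝ³ be a linear orthogonal map that maps the coordinate plane {z = 0} to itself, let α ∈ ℝ with α ≠ 0, and let v_0 ∈ ℝ³; define ψ : ℝ³ → ℝ³ by ψ(v) = α·σ(v) + v_0. Then for every planar rigid motion φ = φ_{θ,a,b} ∈ ASO(2), the composition ψ⁻¹ ∘ φ ∘ ψ again belongs to ASO(2), i.e., there exist (θ', a', b') ∈ ℝ³ with ψ⁻¹ ∘ φ ∘ ψ = φ_{θ',a',b'}. -/

import Mathlib

/-- The planar rigid motion `φ_{θ,a,b} : ℝ³ → ℝ³`,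
`(x, y, z) ↦ (x cos θ − y sin θ + a, x sin θ + y cos θ + b, z)`; the group `ASO(2)`
consists of all such maps. -/
noncomputable def planarMotion (θ a b : ℝ) (v : EuclideanSpace ℝ (Fin 3)) :
    EuclideanSpace ℝ (Fin 3) :=
  WithLp.toLp 2 ![v 0 * Real.cos θ - v 1 * Real.sin θ + a,
    v 0 * Real.sin θ + v 1 * Real.cos θ + b,
    v 2]

noncomputable abbrev E (i : Fin 3) : EuclideanSpace ℝ (Fin 3) := EuclideanSpace.single i 1

lemma decomp (v : EuclideanSpace ℝ (Fin 3)) : v = v 0 • E 0 + v 1 • E 1 + v 2 • E 2 := by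
  ext i
  fin_cases i <;> simp [E, EuclideanSpace.single_apply]

lemma sigma_comp (σ : EuclideanSpace ℝ (Fin 3) ≃ₗᵢ[ℝ] EuclideanSpace ℝ (Fin 3))
    (w : EuclideanSpace ℝ (Fin 3)) (j : Fin 3) :
    σ w j = w 0 * σ (E 0) j + w 1 * σ (E 1) j + w 2 * σ (E 2) j := by
  conv_lhs => rw [decomp w]
  simp [smul_eq_mul]

lemma key (α d q00 q10 q01 q11 c s w0 w1 a b v0 v1 a' b' : ℝ)
    (hn0 : q00^2 + q10^2 = 1) (hd2 : d*d = 1)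
    (h01 : q01 = -d*q10) (h11 : q11 = d*q00)
    (ha' : α * a' = q00*(w0*c - w1*s + a - w0) + q10*(w0*s + w1*c + b - w1))
    (hb' : α * b' = q01*(w0*c - w1*s + a - w0) + q11*(w0*s + w1*c + b - w1)) :
    ((α*(v0*q00+v1*q01)+w0)*c - (α*(v0*q10+v1*q11)+w1)*s + a
      = α*((v0*c - v1*(d*s) + a')*q00 + (v0*(d*s)+v1*c+b')*q01) + w0)
  ∧ ((α*(v0*q00+v1*q01)+w0)*s + (α*(v0*q10+v1*q11)+w1)*c + b
      = α*((v0*c - v1*(d*s) + a')*q10 + (v0*(d*s)+v1*c+b')*q11) + w1) := by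
  subst h01 h11
  constructor
  · linear_combination (-q00)*ha' + (d*q10)*hb'
      + (α*v0*q10*s - (w0*c - w1*s + a - w0)*q10^2 + q00*q10*(w0*s + w1*c + b - w1))*hd2
      + (-(w0*c - w1*s + a - w0))*hn0
  · linear_combination (-q10)*ha' + (-(d*q00))*hb'
      + (-(α*v0*q00*s) + q00*q10*(w0*c - w1*s + a - w0) - (w0*s + w1*c + b - w1)*q00^2)*hd2
      + (-(w0*s + w1*c + b - w1))*hn0

/-- **`G` normalizes `ASO(2)`.** Let `σ` be a linear orthogonal map of
`ℝ³` mapping the plane `{z = 0}` to itself, `α ≠ 0`, `v₀ ∈ ℝ³`, and let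
`ψ(v) = α·σ(v) + v₀`. Then for every planar rigid motion `φ_{θ,a,b}` there are
`(θ', a', b')` with `ψ⁻¹ ∘ φ_{θ,a,b} ∘ ψ = φ_{θ',a',b'}`; equivalently,
`φ_{θ,a,b} ∘ ψ = ψ ∘ φ_{θ',a',b'}`. -/
theorem G_normalizes_ASO2
    (σ : EuclideanSpace ℝ (Fin 3) ≃ₗᵢ[ℝ] EuclideanSpace ℝ (Fin 3))
    (hσ : σ '' {v : EuclideanSpace ℝ (Fin 3) | v 2 = 0} =
      {v : EuclideanSpace ℝ (Fin 3) | v 2 = 0})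
    (α : ℝ) (hα : α ≠ 0) (v₀ : EuclideanSpace ℝ (Fin 3))
    (ψ : EuclideanSpace ℝ (Fin 3) → EuclideanSpace ℝ (Fin 3))
    (hψ : ∀ v, ψ v = α • σ v + v₀) (θ a b : ℝ) :
    ∃ θ' a' b' : ℝ, ∀ v : EuclideanSpace ℝ (Fin 3),
      planarMotion θ a b (ψ v) = ψ (planarMotion θ' a' b' v) := by
  -- plane-preservation facts
  have hplane : ∀ i : Fin 3, i ≠ 2 → σ (E i) 2 = 0 := by
    intro i hi
    have : σ (E i) ∈ {v : EuclideanSpace ℝ (Fin 3) | v 2 = 0} := by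
      rw [← hσ]
      exact ⟨E i, by simp [E, EuclideanSpace.single_apply, Ne.symm hi], rfl⟩
    exact this
  have h02 : σ (E 0) 2 = 0 := hplane 0 (by decide)
  have h12 : σ (E 1) 2 = 0 := hplane 1 (by decide)
  -- σ (E 2) has zero planar components
  have hE2 : ∀ i : Fin 3, i ≠ 2 → σ (E 2) i = 0 := by
    intro i hi
    have hsymm : (σ.symm (E i)) 2 = 0 := by
      have : E i ∈ σ '' {v : EuclideanSpace ℝ (Fin 3) | v 2 = 0} := by
        rw [hσ]; simp [E, EuclideanSpace.single_apply, Ne.symm hi]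
      obtain ⟨w, hw, hw2⟩ := this
      have : σ.symm (E i) = w := by rw [← hw2]; simp
      rw [this]; exact hw
    have h := σ.inner_map_map (E 2) (σ.symm (E i))
    simp only [LinearIsometryEquiv.apply_symm_apply] at h
    simp only [PiLp.inner_apply, RCLike.inner_apply, conj_trivial, Fin.sum_univ_three] at h
    simp [E, EuclideanSpace.single_apply, hsymm] at h
    fin_cases i <;> simp_all [EuclideanSpace.single_apply]
  have h20 : σ (E 2) 0 = 0 := hE2 0 (by decide)
  have h21 : σ (E 2) 1 = 0 := hE2 1 (by decide)
  -- opaque names for the planar 2×2 block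
  obtain ⟨q00, hq00⟩ : ∃ x, σ (E 0) 0 = x := ⟨_, rfl⟩
  obtain ⟨q10, hq10⟩ : ∃ x, σ (E 0) 1 = x := ⟨_, rfl⟩
  obtain ⟨q01, hq01⟩ : ∃ x, σ (E 1) 0 = x := ⟨_, rfl⟩
  obtain ⟨q11, hq11⟩ : ∃ x, σ (E 1) 1 = x := ⟨_, rfl⟩
  have hn0 : q00^2 + q10^2 = 1 := by
    have h := σ.inner_map_map (E 0) (E 0)
    simp only [PiLp.inner_apply, RCLike.inner_apply, conj_trivial, Fin.sum_univ_three] at h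
    rw [hq00, hq10, h02] at h
    simp [E, EuclideanSpace.single_apply] at h
    linear_combination h
  have hn1 : q01^2 + q11^2 = 1 := by
    have h := σ.inner_map_map (E 1) (E 1)
    simp only [PiLp.inner_apply, RCLike.inner_apply, conj_trivial, Fin.sum_univ_three] at h
    rw [hq01, hq11, h12] at h
    simp [E, EuclideanSpace.single_apply] at h
    linear_combination h
  have hor : q00*q01 + q10*q11 = 0 := by
    have h := σ.inner_map_map (E 0) (E 1)
    simp only [PiLp.inner_apply, RCLike.inner_apply, conj_trivial, Fin.sum_univ_three] at h
    rw [hq00, hq10, hq01, hq11, h02] at h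
    simp [E, EuclideanSpace.single_apply] at h
    linear_combination h
  have hd2 : (q00*q11 - q01*q10)*(q00*q11 - q01*q10) = 1 := by nlinarith [hn0, hn1, hor]
  have h01 : q01 = -(q00*q11 - q01*q10)*q10 := by
    linear_combination (-q01) * hn0 + q00 * hor
  have h11 : q11 = (q00*q11 - q01*q10)*q00 := by
    linear_combination (-q11) * hn0 + q10 * hor
  have hdcases : q00*q11 - q01*q10 = 1 ∨ q00*q11 - q01*q10 = -1 := by
    rcases mul_eq_zero.1
        (by linear_combination hd2 :
          ((q00*q11 - q01*q10) - 1) * ((q00*q11 - q01*q10) + 1) = 0) with h | h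
    · left; linarith
    · right; linarith
  obtain ⟨θ', hc', hs'⟩ : ∃ θ', Real.cos θ' = Real.cos θ ∧
      Real.sin θ' = (q00*q11 - q01*q10) * Real.sin θ := by
    rcases hdcases with h | h
    · exact ⟨θ, rfl, by rw [h]; ring⟩
    · exact ⟨-θ, Real.cos_neg θ, by rw [h, Real.sin_neg]; ring⟩
  set c0 : ℝ := v₀ 0 * Real.cos θ - v₀ 1 * Real.sin θ + a - v₀ 0 with hc0
  set c1 : ℝ := v₀ 0 * Real.sin θ + v₀ 1 * Real.cos θ + b - v₀ 1 with hc1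
  refine ⟨θ', (q00*c0 + q10*c1)/α, (q01*c0 + q11*c1)/α, fun v => ?_⟩
  have hK := key α (q00*q11 - q01*q10) q00 q10 q01 q11 (Real.cos θ) (Real.sin θ)
      (v₀ 0) (v₀ 1) a b (v 0) (v 1) ((q00*c0 + q10*c1)/α) ((q01*c0 + q11*c1)/α)
      hn0 hd2 h01 h11 (by rw [hc0, hc1]; field_simp) (by rw [hc0, hc1]; field_simp)
  have hψc : ∀ (w : EuclideanSpace ℝ (Fin 3)) (j : Fin 3),
      ψ w j = α * σ w j + v₀ j := by
    intro w j; rw [hψ]; rfl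
  set u := planarMotion θ' ((q00*c0 + q10*c1)/α) ((q01*c0 + q11*c1)/α) v with hu
  have hu0 : u 0 = v 0 * Real.cos θ' - v 1 * Real.sin θ' + (q00*c0 + q10*c1)/α := by
    rw [hu]; simp [planarMotion]
  have hu1 : u 1 = v 0 * Real.sin θ' + v 1 * Real.cos θ' + (q01*c0 + q11*c1)/α := by
    rw [hu]; simp [planarMotion]
  have hu2 : u 2 = v 2 := by
    rw [hu]; simp [planarMotion]
  ext j
  fin_cases j
  · show planarMotion θ a b (ψ v) 0 = ψ u 0
    rw [hψc u 0, sigma_comp σ u 0, hu0, hu1, hu2]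
    simp only [planarMotion, PiLp.toLp_apply, Matrix.cons_val_zero]
    rw [hψc v 0, hψc v 1, sigma_comp σ v 0, sigma_comp σ v 1]
    rw [hq00, hq10, hq01, hq11, h20, h21, hc', hs']
    linear_combination hK.1
  · show planarMotion θ a b (ψ v) 1 = ψ u 1
    rw [hψc u 1, sigma_comp σ u 1, hu0, hu1, hu2]
    simp only [planarMotion, PiLp.toLp_apply, Matrix.cons_val_one, Matrix.head_cons, Matrix.cons_val_zero]
    rw [hψc v 0, hψc v 1, sigma_comp σ v 0, sigma_comp σ v 1]
    rw [hq00, hq10, hq01, hq11, h20, h21, hc', hs']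
    linear_combination hK.2
  · show planarMotion θ a b (ψ v) 2 = ψ u 2
    rw [hψc u 2, sigma_comp σ u 2, hu0, hu1, hu2]
    have : planarMotion θ a b (ψ v) 2 = ψ v 2 := by simp [planarMotion]
    rw [this, hψc v 2, sigma_comp σ v 2, h02, h12]
    ring
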